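/- arXiv:2404.06045 — 3 statements merged into one kernel-verified Lean document; each statement's English description precedes it below -/
import Mathlib

section
/- Let k be an algebraically closed field of characteristic zero. For every nonzero c ∈ sl₂(k) there exist a, b ∈ sl₂(k) such that c = [a, b] = ab − ba and the only element of sl₂(k) commuting with both a and b is zero (i.e., C(a) ∩ C(b) = 0, centralizers taken in sl₂(k)). -/
open Matrix

theorem sl2_transport
    (k : Type*) [Field k] [CharZero k]
    (c g : Matrix (Fin 2) (Fin 2) k) (δ : k) (hg : IsUnit g.det)
    (hcg : c * g = g * !![0, δ; 1, 0]) :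
    ∃ a b : Matrix (Fin 2) (Fin 2) k,
      Matrix.trace a = 0 ∧ Matrix.trace b = 0 ∧
      c = a * b - b * a ∧
      ∀ d : Matrix (Fin 2) (Fin 2) k,
        Matrix.trace d = 0 → a * d = d * a → b * d = d * b → d = 0 := by
  have hgg : g * g⁻¹ = 1 := mul_nonsing_inv g hg
  have hgg' : g⁻¹ * g = 1 := nonsing_inv_mul g hg
  have expand : ∀ X Y : Matrix (Fin 2) (Fin 2) k,
      g * X * g⁻¹ * (g * Y * g⁻¹) = g * (X * Y) * g⁻¹ := by
    intro X Y
    calc g * X * g⁻¹ * (g * Y * g⁻¹) = g * X * (g⁻¹ * g) * Y * g⁻¹ := by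
          simp only [mul_assoc]
    _ = g * (X * Y) * g⁻¹ := by rw [hgg']; simp only [mul_one, mul_assoc]
  refine ⟨g * !![1, 0; 0, -1] * g⁻¹, g * !![0, δ/2; -(1/2), 0] * g⁻¹, ?_, ?_, ?_, ?_⟩
  · rw [Matrix.trace_mul_comm, ← mul_assoc, hgg', one_mul, trace_fin_two_of]
    ring
  · rw [Matrix.trace_mul_comm, ← mul_assoc, hgg', one_mul, trace_fin_two_of]
    ring
  · have hAB : !![(1:k), 0; 0, -1] * !![0, δ/2; -(1/2), 0]
        - !![(0:k), δ/2; -(1/2), 0] * !![1, 0; 0, -1] = !![0, δ; 1, 0] := by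
      ext i j
      fin_cases i <;> fin_cases j <;>
        simp [Matrix.mul_apply, Fin.sum_univ_two] <;> ring
    calc c = c * g * g⁻¹ := by rw [mul_assoc, hgg, mul_one]
    _ = g * !![0, δ; 1, 0] * g⁻¹ := by rw [hcg]
    _ = _ := by
        rw [expand, expand, ← Matrix.sub_mul, ← Matrix.mul_sub, hAB]
  · intro d htr had hbd
    have conj_comm : ∀ X : Matrix (Fin 2) (Fin 2) k,
        g * X * g⁻¹ * d = d * (g * X * g⁻¹) →
        X * (g⁻¹ * d * g) = (g⁻¹ * d * g) * X := by
      intro X h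
      have h2 : g⁻¹ * (g * X * g⁻¹ * d) * g = g⁻¹ * (d * (g * X * g⁻¹)) * g := by rw [h]
      calc X * (g⁻¹ * d * g) = g⁻¹ * (g * X * g⁻¹ * d) * g := by
            simp only [← mul_assoc]; rw [hgg', one_mul]
      _ = g⁻¹ * (d * (g * X * g⁻¹)) * g := h2
      _ = (g⁻¹ * d * g) * X := by
            simp only [← mul_assoc]
            rw [mul_assoc (g⁻¹ * d * g * X) g⁻¹ g, hgg', mul_one]
    have hae := conj_comm _ had
    have hbe := conj_comm _ hbd
    have hetr : Matrix.trace (g⁻¹ * d * g) = 0 := by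
      rw [Matrix.trace_mul_comm, ← mul_assoc, hgg, one_mul, htr]
    set e : Matrix (Fin 2) (Fin 2) k := g⁻¹ * d * g with he
    have hsum : e 0 0 + e 1 1 = 0 := by
      simpa [Matrix.trace, Fin.sum_univ_two, Matrix.diag] using hetr
    have h01 : e 0 1 = 0 := by
      have := congrFun (congrFun hae 0) 1
      simp [Matrix.mul_apply, Fin.sum_univ_two] at this
      linear_combination this / 2
    have h10 : e 1 0 = 0 := by
      have := congrFun (congrFun hae 1) 0
      simp [Matrix.mul_apply, Fin.sum_univ_two] at this
      linear_combination (-1/2 : k) * this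
    have h00 : e 0 0 = 0 := by
      have := congrFun (congrFun hbe 1) 0
      simp [Matrix.mul_apply, Fin.sum_univ_two] at this
      linear_combination this + hsum / 2
    have h11 : e 1 1 = 0 := by linear_combination hsum - h00
    have he0 : e = 0 := by
      ext i j; fin_cases i <;> fin_cases j <;>
        simp [h00, h01, h10, h11]
    calc d = g * (g⁻¹ * d * g) * g⁻¹ := by
          simp only [← mul_assoc]; rw [hgg, one_mul, mul_assoc, hgg, mul_one]
    _ = 0 := by rw [← he, he0]; simp

/-- Every nonzero trace-zero 2×2 matrix `c` over an algebraically closed field of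
characteristic zero is a commutator `c = a*b - b*a` of trace-zero matrices `a, b` whose only
common centralizer in `sl₂` is zero. -/
theorem sl2_condition_star
    (k : Type*) [Field k] [IsAlgClosed k] [CharZero k]
    (c : Matrix (Fin 2) (Fin 2) k) (hc_tr : Matrix.trace c = 0) (hc : c ≠ 0) :
    ∃ a b : Matrix (Fin 2) (Fin 2) k,
      Matrix.trace a = 0 ∧ Matrix.trace b = 0 ∧
      c = a * b - b * a ∧
      ∀ d : Matrix (Fin 2) (Fin 2) k,
        Matrix.trace d = 0 → a * d = d * a → b * d = d * b → d = 0 := by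
  have hsum : c 0 0 + c 1 1 = 0 := by
    simpa [Matrix.trace, Fin.sum_univ_two, Matrix.diag] using hc_tr
  by_cases h10 : c 1 0 ≠ 0
  · apply sl2_transport k c !![1, c 0 0; 0, c 1 0] (c 0 0 ^ 2 + c 0 1 * c 1 0)
    · simp [Matrix.det_fin_two_of, isUnit_iff_ne_zero, h10]
    · ext i j
      fin_cases i <;> fin_cases j <;>
        simp [Matrix.mul_apply, Fin.sum_univ_two] <;>
        first
          | ring1
          | linear_combination hsum
          | linear_combination (c 1 0) * hsum
          | linear_combination (c 0 1) * hsum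
          | linear_combination (c 1 1 - c 0 0) * hsum
            | linear_combination (-(c 0 0)) * hsum
  · push_neg at h10
    by_cases h01 : c 0 1 ≠ 0
    · apply sl2_transport k c !![0, c 0 1; 1, c 1 1] (c 0 0 ^ 2 + c 0 1 * c 1 0)
      · simp [Matrix.det_fin_two_of, isUnit_iff_ne_zero, h01]
      · ext i j
        fin_cases i <;> fin_cases j <;>
          simp [Matrix.mul_apply, Fin.sum_univ_two] <;>
          first
            | ring1
            | linear_combination hsum
            | linear_combination (c 1 0) * hsum
            | linear_combination (c 0 1) * hsum
            | linear_combination (c 1 1 - c 0 0) * hsum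
            | linear_combination (-(c 0 0)) * hsum
    · push_neg at h01
      have h00 : c 0 0 ≠ 0 := by
        intro h0
        apply hc
        ext i j
        fin_cases i <;> fin_cases j <;>
          simp [h0, h01, h10] <;> linear_combination hsum - h0
      apply sl2_transport k c !![1, c 0 0; 1, -(c 0 0)] (c 0 0 ^ 2 + c 0 1 * c 1 0)
      · have : (!![1, c 0 0; 1, -(c 0 0)] : Matrix (Fin 2) (Fin 2) k).det = -(2 * c 0 0) := by
          simp [Matrix.det_fin_two_of]; ring
        rw [this]
        simpa [isUnit_iff_ne_zero] using h00
      · ext i j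
        fin_cases i <;> fin_cases j <;>
          simp [Matrix.mul_apply, Fin.sum_univ_two, h01, h10] <;>
          first
            | ring1
            | linear_combination hsum
            | linear_combination (c 1 0) * hsum
            | linear_combination (c 0 1) * hsum
            | linear_combination (c 1 1 - c 0 0) * hsum
            | linear_combination (-(c 0 0)) * hsum
end

section
/- (Guralnick's lemma) Let k be an algebraically closed field and let A, B be n×n matrices over k such that the matrix AB − BA has rank at most 1. Then A and B can be simultaneously conjugated to upper triangular form: there exists an invertible n×n matrix P over k such that both P A P⁻¹ and P B P⁻¹ are upper triangular. -/
/-!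
The heart of the argument is that `A` and `B` have a common eigenvector. Let `μ` be an eigenvalue
of `A`. If `B` preserves `ker (A - μ)`, it has an eigenvector there. Otherwise some `w` with
`A w = μ w` has `[A, B] w = (A - μ) (B w) ≠ 0`; since `[A, B]` has rank at most one, its whole
image is the line through this vector, hence lies in `U = im (A - μ)`. Then `U` is invariant under
both `A` and `B` (as `B (A - μ) = (A - μ) B - [A, B]`), it is a proper nonzero subspace, and the
restrictions still have a commutator of rank at most one, so we conclude by induction on the
dimension.

Triangularization follows by induction as well: passing to the quotient by the line through a
common eigenvector does not increase the rank of the commutator.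
-/

open Module

namespace Module.End

open LinearMap

section CommRing

variable {R M : Type*} [CommRing R] [AddCommGroup M] [Module R M] {f g : End R M}

theorem HasEigenvector.of_restrict {p : Submodule R M} (hf : ∀ x ∈ p, f x ∈ p) {μ : R} {v : p}
    (hv : HasEigenvector (f.restrict hf) μ v) : f.HasEigenvector μ v :=
  ⟨eigenspace_restrict_le_eigenspace f hf μ ⟨v, hv.1, rfl⟩, by simpa using hv.2⟩

theorem HasEigenvector.span_singleton_le_comap {μ : R} {v : M} (hv : f.HasEigenvector μ v) :
    R ∙ v ≤ (R ∙ v).comap f := by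
  rw [Submodule.span_singleton_le_iff_mem, Submodule.mem_comap, hv.apply_eq_smul]
  exact Submodule.smul_mem _ _ (Submodule.mem_span_singleton_self v)

theorem lie_apply_of_mem_eigenspace {μ : R} {w : M} (hw : w ∈ f.eigenspace μ) :
    ⁅f, g⁆ w = (f - μ • 1) (g w) := by
  simp [Ring.lie_def, mem_eigenspace_iff.mp hw]

theorem mapsTo_range_sub_smul (μ : R) :
    ∀ x ∈ range (f - μ • 1), f x ∈ range (f - μ • 1) := by
  rintro _ ⟨y, rfl⟩
  exact ⟨f y, by simp⟩

theorem mapsTo_range_sub_smul_of_range_lie_le {μ : R} (h : range ⁅f, g⁆ ≤ range (f - μ • 1)) :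
    ∀ x ∈ range (f - μ • 1), g x ∈ range (f - μ • 1) := by
  rintro _ ⟨y, rfl⟩
  have hswap : g ((f - μ • 1) y) = (f - μ • 1) (g y) - ⁅f, g⁆ y := by simp [Ring.lie_def]
  rw [hswap]
  exact sub_mem (mem_range_self _ _) (h (mem_range_self _ _))

end CommRing

variable {K V : Type*} [Field K] [AddCommGroup V] [Module K V] {f g : End K V}

section FiniteDimensional

variable [FiniteDimensional K V]

theorem finrank_range_lie_restrict_le {p : Submodule K V} (hf : ∀ x ∈ p, f x ∈ p)
    (hg : ∀ x ∈ p, g x ∈ p) :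
    finrank K (range ⁅f.restrict hf, g.restrict hg⁆) ≤ finrank K (range ⁅f, g⁆) := by
  have hcomm : p.subtype ∘ₗ ⁅f.restrict hf, g.restrict hg⁆ = ⁅f, g⁆ ∘ₗ p.subtype := by
    ext; simp [Ring.lie_def]
  calc finrank K (range ⁅f.restrict hf, g.restrict hg⁆)
      = finrank K (range (p.subtype ∘ₗ ⁅f.restrict hf, g.restrict hg⁆)) := by
        rw [range_comp, Submodule.finrank_map_subtype_eq]
    _ ≤ finrank K (range ⁅f, g⁆) := by
        rw [hcomm]; exact Submodule.finrank_mono (range_comp_le_range _ _)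

theorem finrank_range_lie_mapQ_le {p : Submodule K V} (hf : p ≤ p.comap f)
    (hg : p ≤ p.comap g) :
    finrank K (range ⁅p.mapQ p f hf, p.mapQ p g hg⁆) ≤ finrank K (range ⁅f, g⁆) := by
  have hcomm : ⁅p.mapQ p f hf, p.mapQ p g hg⁆ ∘ₗ p.mkQ = p.mkQ ∘ₗ ⁅f, g⁆ := by
    ext; simp [Ring.lie_def]
  calc finrank K (range ⁅p.mapQ p f hf, p.mapQ p g hg⁆)
      = finrank K (range (p.mkQ ∘ₗ ⁅f, g⁆)) := by
        rw [← hcomm, range_comp_of_range_eq_top _ p.range_mkQ]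
    _ ≤ finrank K (range ⁅f, g⁆) := by
        rw [range_comp]; exact Submodule.finrank_map_le _ _

theorem range_lie_le_range_sub_smul {μ : K} {w : V} (hw : w ∈ f.eigenspace μ)
    (hgw : g w ∉ f.eigenspace μ) (h : finrank K (range ⁅f, g⁆) ≤ 1) :
    range ⁅f, g⁆ ≤ range (f - μ • 1) := by
  have hw₀ : ⁅f, g⁆ w ≠ 0 := by
    rwa [lie_apply_of_mem_eigenspace hw, Ne, ← mem_ker, ← eigenspace_def]
  have hrank : finrank K (range ⁅f, g⁆) = 1 := le_antisymm h <|
    Submodule.one_le_finrank_iff.mpr ((Submodule.ne_bot_iff _).mpr ⟨_, mem_range_self _ w, hw₀⟩)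
  rw [eq_span_singleton_of_mem_of_finrank_eq_one hrank (mem_range_self _ w) hw₀,
    Submodule.span_singleton_le_iff_mem, lie_apply_of_mem_eigenspace hw]
  exact mem_range_self _ _

variable [IsAlgClosed K]

theorem exists_hasEigenvector_of_mapsTo_eigenspace {μ : K} (hμ : f.HasEigenvalue μ)
    (hg : ∀ x ∈ f.eigenspace μ, g x ∈ f.eigenspace μ) :
    ∃ v ν, f.HasEigenvector μ v ∧ g.HasEigenvector ν v := by
  have : Nontrivial (f.eigenspace μ) := Submodule.nontrivial_iff_ne_bot.mpr hμ
  obtain ⟨ν, hν⟩ := exists_eigenvalue (g.restrict hg)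
  obtain ⟨w, hw⟩ := hν.exists_hasEigenvector
  exact ⟨w, ν, ⟨w.2, by simpa using hw.2⟩, hw.of_restrict hg⟩

theorem exists_hasEigenvector_of_finrank_range_lie_le_one [Nontrivial V]
    (h : finrank K (range ⁅f, g⁆) ≤ 1) :
    ∃ v μ ν, f.HasEigenvector μ v ∧ g.HasEigenvector ν v := by
  induction hn : finrank K V using Nat.strong_induction_on generalizing V with
  | _ n ih =>
  obtain ⟨μ, hμ⟩ := exists_eigenvalue f
  by_cases hg : ∀ x ∈ f.eigenspace μ, g x ∈ f.eigenspace μ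
  · obtain ⟨v, ν, hfv, hgv⟩ := exists_hasEigenvector_of_mapsTo_eigenspace hμ hg
    exact ⟨v, μ, ν, hfv, hgv⟩
  push Not at hg
  obtain ⟨w, hw, hgw⟩ := hg
  have hfU := mapsTo_range_sub_smul (f := f) μ
  have hgU := mapsTo_range_sub_smul_of_range_lie_le (range_lie_le_range_sub_smul hw hgw h)
  have hU : range (f - μ • 1) ≠ ⊥ := by
    intro hU
    rw [range_eq_bot] at hU
    exact hgw (by simp [eigenspace_def, hU])
  have hlt : finrank K (range (f - μ • 1)) < n := by
    have hker : 0 < finrank K (ker (f - μ • 1)) := by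
      rw [← eigenspace_def]; exact Submodule.one_le_finrank_iff.mpr hμ
    have := finrank_range_add_finrank_ker (f - μ • 1)
    omega
  have : Nontrivial (range (f - μ • 1)) := Submodule.nontrivial_iff_ne_bot.mpr hU
  obtain ⟨v, μ', ν', hfv, hgv⟩ := ih _ hlt (f := f.restrict hfU) (g := g.restrict hgU)
    ((finrank_range_lie_restrict_le hfU hgU).trans h) rfl
  exact ⟨v, μ', ν', hfv.of_restrict hfU, hgv.of_restrict hgU⟩

end FiniteDimensional

end Module.End

namespace Module.Basis

variable {R M : Type*} [CommRing R] [AddCommGroup M] [Module R M] {W : Submodule R M}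

theorem blockTriangular_toMatrix_sumQuot {m n α : Type*} [Fintype m] [Fintype n] [DecidableEq m]
    [DecidableEq n] [Preorder α] (bW : Basis m R W) (bQ : Basis n R (M ⧸ W)) {f : End R M}
    (hf : W ≤ W.comap f) {φ : m ⊕ n → α} (hφ : ∀ i j, φ (.inl i) ≤ φ (.inr j))
    (hW : (LinearMap.toMatrix bW bW (f.restrict hf)).BlockTriangular (φ ∘ .inl))
    (hQ : (LinearMap.toMatrix bQ bQ (W.mapQ W f hf)).BlockTriangular (φ ∘ .inr)) :
    (LinearMap.toMatrix (bW.sumQuot bQ) (bW.sumQuot bQ) f).BlockTriangular φ := by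
  rintro (a | a) (c | c) hlt <;> simp only [LinearMap.toMatrix_apply]
  · rw [sumQuot_inl, sumQuot_repr_inl_of_mem _ _ (f (bW c)) (Submodule.mem_comap.mp (hf (bW c).2))]
    exact (LinearMap.toMatrix_apply _ _ _ _ _).symm.trans (hW hlt)
  · exact absurd hlt (hφ a c).not_gt
  · rw [sumQuot_inl, sumQuot_repr_inr_of_mem _ _ (f (bW c)) (Submodule.mem_comap.mp (hf (bW c).2))]
  · rw [sumQuot_repr_inr, W.mkQ_apply, ← W.mapQ_apply W f (h := hf), sumQuot_inr]
    simpa [LinearMap.toMatrix_apply] using hQ hlt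

theorem blockTriangular_toMatrix_reindex {ι ι' : Type*} [Fintype ι] [DecidableEq ι] [Fintype ι']
    [DecidableEq ι'] [Preorder ι'] (b : Basis ι R M) (e : ι ≃ ι') {f : End R M}
    (h : (LinearMap.toMatrix b b f).BlockTriangular e) :
    (LinearMap.toMatrix (b.reindex e) (b.reindex e) f).BlockTriangular id := fun i j hij => by
  simpa [LinearMap.toMatrix_apply] using h (show e (e.symm j) < e (e.symm i) by simpa)

theorem blockTriangular_toMatrix_reindex_sumQuot {m n : ℕ} (bW : Basis (Fin m) R W)
    (bQ : Basis (Fin n) R (M ⧸ W)) {f : End R M} (hf : W ≤ W.comap f)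
    (hW : (LinearMap.toMatrix bW bW (f.restrict hf)).BlockTriangular id)
    (hQ : (LinearMap.toMatrix bQ bQ (W.mapQ W f hf)).BlockTriangular id) :
    (LinearMap.toMatrix ((bW.sumQuot bQ).reindex finSumFinEquiv)
      ((bW.sumQuot bQ).reindex finSumFinEquiv) f).BlockTriangular id := by
  refine blockTriangular_toMatrix_reindex _ _ (blockTriangular_toMatrix_sumQuot bW bQ hf ?_ ?_ ?_)
  · intro i j
    simp only [finSumFinEquiv_apply_left, finSumFinEquiv_apply_right, Fin.le_def, Fin.val_castAdd,
      Fin.val_natAdd]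
    omega
  · intro i j hij
    apply hW
    simpa only [Function.comp_apply, finSumFinEquiv_apply_left, Fin.lt_def, Fin.val_castAdd, id]
      using hij
  · intro i j hij
    apply hQ
    simp only [Function.comp_apply, finSumFinEquiv_apply_right, Fin.lt_def, Fin.val_natAdd,
      id] at hij ⊢
    omega

theorem toMatrix_mul_mul_inv_eq_toMatrix_toLin' {ι : Type*} [Fintype ι] [DecidableEq ι]
    (b : Basis ι R (ι → R)) (A : Matrix ι ι R) :
    b.toMatrix (Pi.basisFun R ι) * A * (b.toMatrix (Pi.basisFun R ι))⁻¹ =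
      LinearMap.toMatrix b b (Matrix.toLin' A) := by
  rw [Matrix.inv_eq_right_inv (b.toMatrix_mul_toMatrix_flip _),
    ← basis_toMatrix_mul_linearMap_toMatrix_mul_basis_toMatrix b (Pi.basisFun R ι) b
      (Pi.basisFun R ι),
    LinearMap.toMatrix_eq_toMatrix', LinearMap.toMatrix'_toLin']

end Module.Basis

theorem Module.End.exists_basis_blockTriangular_of_finrank_range_lie_le_one {K V : Type*}
    [Field K] [IsAlgClosed K] [AddCommGroup V] [Module K V] [FiniteDimensional K V]
    {f g : End K V} (h : finrank K (LinearMap.range ⁅f, g⁆) ≤ 1) {n : ℕ} (hn : finrank K V = n) :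
    ∃ b : Basis (Fin n) K V, (LinearMap.toMatrix b b f).BlockTriangular id ∧
      (LinearMap.toMatrix b b g).BlockTriangular id := by
  induction n generalizing V with
  | zero => exact ⟨finBasisOfFinrankEq K V hn, fun i => i.elim0, fun i => i.elim0⟩
  | succ n ih =>
  have : Nontrivial V := Module.nontrivial_of_finrank_eq_succ hn
  obtain ⟨v, μ, ν, hfv, hgv⟩ := exists_hasEigenvector_of_finrank_range_lie_le_one h
  have hfW := hfv.span_singleton_le_comap
  have hgW := hgv.span_singleton_le_comap
  have hQ : finrank K (V ⧸ K ∙ v) = n := by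
    have := Submodule.finrank_quotient_add_finrank (K ∙ v)
    rw [finrank_span_singleton hfv.2] at this
    omega
  obtain ⟨bQ, hfQ, hgQ⟩ := ih ((finrank_range_lie_mapQ_le hfW hgW).trans h) hQ
  let bW : Basis (Fin 1) K (K ∙ v) := finBasisOfFinrankEq K _ (finrank_span_singleton hfv.2)
  have hW : ∀ (F : End K V) (hF : K ∙ v ≤ (K ∙ v).comap F),
      (LinearMap.toMatrix bW bW (F.restrict hF)).BlockTriangular id :=
    fun _ _ i j hij => (hij.ne (Subsingleton.elim _ _)).elim
  -- `finSumFinEquiv` indexes the combined basis by `Fin (1 + n)`.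
  rw [Nat.add_comm n 1]
  exact ⟨_, Basis.blockTriangular_toMatrix_reindex_sumQuot bW bQ hfW (hW f hfW) hfQ,
    Basis.blockTriangular_toMatrix_reindex_sumQuot bW bQ hgW (hW g hgW) hgQ⟩

theorem Matrix.rank_lie_eq_finrank_range_lie_toLin' {R ι : Type*} [CommRing R] [Fintype ι]
    [DecidableEq ι] (A B : Matrix ι ι R) :
    ⁅A, B⁆.rank = finrank R (LinearMap.range ⁅Matrix.toLin' A, Matrix.toLin' B⁆) := by
  rw [Ring.lie_def, Ring.lie_def, Matrix.rank, ← Matrix.toLin'_apply', map_sub, Matrix.toLin'_mul,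
    Matrix.toLin'_mul]
  rfl

/-- Guralnick's lemma: if `A, B` are square matrices over an algebraically closed field with
`rank (AB - BA) ≤ 1`, then `A` and `B` are simultaneously conjugate to upper triangular
matrices. -/
theorem guralnick_simultaneous_triangularization
    (k : Type*) [Field k] [IsAlgClosed k]
    (n : ℕ) (A B : Matrix (Fin n) (Fin n) k)
    (h : (A * B - B * A).rank ≤ 1) :
    ∃ P : Matrix (Fin n) (Fin n) k, IsUnit P.det ∧
      (P * A * P⁻¹).BlockTriangular id ∧ (P * B * P⁻¹).BlockTriangular id := by
  rw [← Ring.lie_def, Matrix.rank_lie_eq_finrank_range_lie_toLin'] at h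
  obtain ⟨b, hA, hB⟩ :=
    Module.End.exists_basis_blockTriangular_of_finrank_range_lie_le_one h (finrank_fin_fun k)
  refine ⟨b.toMatrix (Pi.basisFun k (Fin n)),
    Matrix.isUnit_det_of_right_inverse (b.toMatrix_mul_toMatrix_flip _), ?_, ?_⟩
  · rwa [b.toMatrix_mul_mul_inv_eq_toMatrix_toLin']
  · rwa [b.toMatrix_mul_mul_inv_eq_toMatrix_toLin']
end

section
/- Let g be a finite-dimensional simple Lie algebra over an algebraically closed field of characteristic zero. Then there exists a pair (a, b) of elements of g whose common centralizer is trivial: C_g(a) ∩ C_g(b) = 0. (In particular, the set of such pairs is nonempty; the paper shows it is moreover Zariski open and dense in g ⊕ g.) -/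
/-!
Take `a` regular, so that its Engel subalgebra `H` is a Cartan subalgebra, and let `b` be a sum
of nonzero vectors, one from each weight space of `H`. Anything commuting with `a` lies in `H`.
Since the Killing form is nondegenerate (Cartan's criterion), `H` is toral: `h ∈ H` acts on the
summand of weight `α` by the scalar `α h`. So `⁅h, b⁆ = 0` forces every weight to vanish at `h`,
by linear independence of the summands, and the weights of a Cartan subalgebra have no common
zero but `0`.
-/

open LieAlgebra LieModule

lemma LieModule.linearIndependent_of_mem_genWeightSpace {K L M : Type*} [Field K] [LieRing L]
    [LieAlgebra K L] [LieRing.IsNilpotent L] [AddCommGroup M] [Module K M] [LieRingModule L M]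
    [LieModule K L M] [FiniteDimensional K M] {e : Weight K L M → M}
    (he : ∀ χ : Weight K L M, e χ ∈ genWeightSpace M χ) (he₀ : ∀ χ, e χ ≠ 0) :
    LinearIndependent K e :=
  (LieSubmodule.iSupIndep_toSubmodule.mpr (iSupIndep_genWeightSpace' K L M)).linearIndependent
    _ he he₀

lemma LieAlgebra.IsKilling.exists_forall_eq_zero_of_lie_eq_zero {K L : Type*} [Field K]
    [CharZero K] [LieRing L] [LieAlgebra K L] [FiniteDimensional K L] [IsKilling K L]
    (H : LieSubalgebra K L) [H.IsCartanSubalgebra] [IsTriangularizable K H L] :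
    ∃ b : L, ∀ h ∈ H, ⁅h, b⁆ = 0 → h = 0 := by
  choose e he he₀ using fun α : Weight K H L ↦ α.exists_ne_zero
  refine ⟨∑ α, e α, fun h hH hb ↦ ?_⟩
  have hsum : ∑ α, α ⟨h, hH⟩ • e α = 0 := by
    rw [← hb, lie_sum]
    exact Finset.sum_congr rfl fun α _ ↦ (lie_eq_smul_of_mem_rootSpace (he α) ⟨h, hH⟩).symm
  have hker : ⟨h, hH⟩ ∈ ⨅ α : Weight K H L, α.ker := Submodule.mem_iInf _ |>.mpr fun α ↦
    Fintype.linearIndependent_iff.mp (linearIndependent_of_mem_genWeightSpace he he₀) _ hsum α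
  rw [iInf_ker_weight_eq_bot, Submodule.mem_bot] at hker
  exact congrArg Subtype.val hker

/-- In a finite-dimensional simple Lie algebra over an algebraically closed field of
characteristic zero there exists a pair of elements with trivial common centralizer. -/
theorem exists_pair_trivial_common_centralizer
    (k : Type*) [Field k] [IsAlgClosed k] [CharZero k]
    (𝔤 : Type*) [LieRing 𝔤] [LieAlgebra k 𝔤] [FiniteDimensional k 𝔤]
    [LieAlgebra.IsSimple k 𝔤] :
    ∃ a b : 𝔤, ∀ x : 𝔤, ⁅a, x⁆ = 0 → ⁅b, x⁆ = 0 → x = 0 := by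
  obtain ⟨a, _⟩ := exists_isCartanSubalgebra_engel k 𝔤
  obtain ⟨b, hb⟩ := IsKilling.exists_forall_eq_zero_of_lie_eq_zero (LieSubalgebra.engel k a)
  refine ⟨a, b, fun x hax hbx ↦ ?_⟩
  have hx : x ∈ LieSubalgebra.engel k a := (LieSubalgebra.mem_engel_iff k a x).mpr ⟨1, by simpa⟩
  exact hb x hx (by rw [← lie_skew, hbx, neg_zero])
end
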